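/- arXiv:1907.01898 — 2 statements merged into one kernel-verified Lean document; each statement's English description precedes it below -/
import Mathlib

section
/- Fix n ∈ ℕ and let Z_1, …, Z_n be i.i.d. real random variables with E[Z_1²] < ∞. Let W_1, …, W_n be real random variables such that the random vector (W_1, …, W_n) is independent of (Z_1, …, Z_n), E[Σ_{s=1}^n W_s²] < ∞, and Σ_{s=1}^n W_s = c almost surely for a deterministic constant c. Then Var(Σ_{s=1}^n W_s Z_s) = E[Σ_{s=1}^n W_s²] · Var(Z_1); in particular Var(Σ_{s=1}^n W_s Z_s) ≤ E[Σ_{s=1}^n W_s²] · E[Z_1²]. -/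
open MeasureTheory ProbabilityTheory

lemma aux_int_mul {Ω : Type*} [MeasureSpace Ω] {f g : Ω → ℝ}
    (hf : MemLp f 2 ℙ) (hg : MemLp g 2 ℙ) :
    Integrable (fun ω => f ω * g ω) ℙ := by
  have h : MemLp (g • f) 1 ℙ := hf.smul hg
  rw [memLp_one_iff_integrable] at h
  have : (fun ω => f ω * g ω) = g • f := by
    funext ω; simp [mul_comm]
  rw [this]; exact h

/-- Exact variance identity for a weighted sum of i.i.d. random variables with random
weights whose sum is almost surely constant, together with the resulting bound
(used within the proofs of Lemma 1 and Theorem 1 of the paper). -/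
theorem stmt_3
    {Ω : Type*} [MeasureSpace Ω] [IsProbabilityMeasure (ℙ : Measure Ω)]
    (n : ℕ) (hn : 0 < n)
    (Z W : Fin n → Ω → ℝ)
    (hZmeas : ∀ s, Measurable (Z s))
    (hWmeas : ∀ s, Measurable (W s))
    -- the `Z_s` are i.i.d.
    (hZindep : iIndepFun Z ℙ)
    (hZident : ∀ s t : Fin n, IdentDistrib (Z s) (Z t) ℙ ℙ)
    -- `E[Z_1²] < ∞`
    (hZsq : Integrable (fun ω => (Z ⟨0, hn⟩ ω) ^ 2) ℙ)
    -- the random vector `(W_1, …, W_n)` is independent of `(Z_1, …, Z_n)`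
    (hWZindep : IndepFun (fun ω s => W s ω) (fun ω s => Z s ω) ℙ)
    -- `E[Σ_s W_s²] < ∞`
    (hWsq : Integrable (fun ω => ∑ s, (W s ω) ^ 2) ℙ)
    -- `Σ_s W_s = c` almost surely, for a deterministic constant `c`
    (c : ℝ) (hc : ∀ᵐ ω ∂ℙ, ∑ s, W s ω = c) :
    variance (fun ω => ∑ s, W s ω * Z s ω) ℙ
        = (∫ ω, ∑ s, (W s ω) ^ 2 ∂ℙ) * variance (Z ⟨0, hn⟩) ℙ
      ∧ variance (fun ω => ∑ s, W s ω * Z s ω) ℙ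
        ≤ (∫ ω, ∑ s, (W s ω) ^ 2 ∂ℙ) * ∫ ω, (Z ⟨0, hn⟩ ω) ^ 2 ∂ℙ := by
  set i0 : Fin n := ⟨0, hn⟩ with hi0
  set μZ : ℝ := ∫ ω, Z i0 ω with hμZ
  set m2 : ℝ := ∫ ω, (Z i0 ω) ^ 2 with hm2
  set EW2 : ℝ := ∫ ω, ∑ s, (W s ω) ^ 2 ∂ℙ with hEW2
  -- membership in L²
  have hZ0mem : MemLp (Z i0) 2 ℙ :=
    (memLp_two_iff_integrable_sq (hZmeas i0).aestronglyMeasurable).2 hZsq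
  have hZmem : ∀ s, MemLp (Z s) 2 ℙ := fun s => (hZident i0 s).memLp_snd hZ0mem
  have hWmem : ∀ s, MemLp (W s) 2 ℙ := by
    intro s
    refine (memLp_two_iff_integrable_sq (hWmeas s).aestronglyMeasurable).2 ?_
    refine hWsq.mono' ((hWmeas s).pow_const 2).aestronglyMeasurable ?_
    filter_upwards with ω
    rw [Real.norm_eq_abs, abs_of_nonneg (sq_nonneg _)]
    exact Finset.single_le_sum (fun t _ => sq_nonneg (W t ω)) (Finset.mem_univ s)
  have hZint : ∀ s, Integrable (Z s) ℙ := fun s => (hZmem s).integrable one_le_two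
  have hWint : ∀ s, Integrable (W s) ℙ := fun s => (hWmem s).integrable one_le_two
  -- products are integrable
  have hWW : ∀ s t, Integrable (fun ω => W s ω * W t ω) ℙ :=
    fun s t => aux_int_mul (hWmem s) (hWmem t)
  have hZZ : ∀ s t, Integrable (fun ω => Z s ω * Z t ω) ℙ :=
    fun s t => aux_int_mul (hZmem s) (hZmem t)
  -- independence of functions of the two vectors
  have hindep : ∀ (φ ψ : (Fin n → ℝ) → ℝ), Measurable φ → Measurable ψ →
      IndepFun (fun ω => φ (fun s => W s ω)) (fun ω => ψ (fun s => Z s ω)) ℙ :=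
    fun φ ψ hφ hψ => hWZindep.comp hφ hψ
  have hindep2 : ∀ s t : Fin n, IndepFun (fun ω => W s ω * W t ω)
      (fun ω => Z s ω * Z t ω) ℙ := fun s t =>
    hindep (fun x => x s * x t) (fun x => x s * x t)
      ((measurable_pi_apply s).mul (measurable_pi_apply t))
      ((measurable_pi_apply s).mul (measurable_pi_apply t))
  have hindep1 : ∀ s : Fin n, IndepFun (W s) (Z s) ℙ := fun s =>
    hindep (fun x => x s) (fun x => x s) (measurable_pi_apply s) (measurable_pi_apply s)
  have hWZint : ∀ s, Integrable (fun ω => W s ω * Z s ω) ℙ := fun s =>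
    (hindep1 s).integrable_mul (hWint s) (hZint s)
  have hterm : ∀ s t, Integrable (fun ω => W s ω * W t ω * (Z s ω * Z t ω)) ℙ :=
    fun s t => (hindep2 s t).integrable_mul (hWW s t) (hZZ s t)
  -- integral identities
  have hZint_eq : ∀ s, ∫ ω, Z s ω = μZ := fun s => ((hZident i0 s).integral_eq).symm
  have hZsq_eq : ∀ s, ∫ ω, (Z s ω) ^ 2 = m2 := fun s =>
    (((hZident i0 s).comp (measurable_id.pow_const 2)).integral_eq).symm
  have hEterm : ∀ s t, ∫ ω, W s ω * W t ω * (Z s ω * Z t ω)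
      = (∫ ω, W s ω * W t ω) * (∫ ω, Z s ω * Z t ω) := fun s t =>
    (hindep2 s t).integral_fun_mul_eq_mul_integral ((hWmeas s).mul (hWmeas t)).aestronglyMeasurable
      ((hZmeas s).mul (hZmeas t)).aestronglyMeasurable
  have hEZZ : ∀ s t : Fin n, ∫ ω, Z s ω * Z t ω = if s = t then m2 else μZ ^ 2 := by
    intro s t
    by_cases hst : s = t
    · subst hst
      simp only [if_pos rfl]
      rw [← hZsq_eq s]
      congr 1; funext ω; ring
    · rw [if_neg hst]
      have h : ∫ ω, Z s ω * Z t ω = (∫ ω, Z s ω) * ∫ ω, Z t ω :=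
        (hZindep.indepFun hst).integral_fun_mul_eq_mul_integral (hZmeas s).aestronglyMeasurable
          (hZmeas t).aestronglyMeasurable
      rw [h, hZint_eq s, hZint_eq t, sq]
  -- mean of S
  have hESum : ∫ ω, ∑ s, W s ω = c := by
    rw [integral_congr_ae hc, integral_const]
    simp
  have hES : ∫ ω, ∑ s, W s ω * Z s ω = μZ * c := by
    rw [integral_finset_sum _ (fun s _ => hWZint s)]
    have : ∀ s : Fin n, ∫ ω, W s ω * Z s ω = (∫ ω, W s ω) * μZ := fun s => by
      have h : ∫ ω, W s ω * Z s ω = (∫ ω, W s ω) * ∫ ω, Z s ω :=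
        (hindep1 s).integral_fun_mul_eq_mul_integral (hWmeas s).aestronglyMeasurable
          (hZmeas s).aestronglyMeasurable
      rw [h, hZint_eq s]
    simp_rw [this]
    rw [← Finset.sum_mul, ← integral_finset_sum _ (fun s _ => hWint s), hESum, mul_comm]
  -- sum of all E[W_s W_t] equals c²
  have hA : ∑ s : Fin n, ∑ t : Fin n, ∫ ω, W s ω * W t ω = c ^ 2 := by
    have h1 : ∫ ω, (∑ s, W s ω) ^ 2 = ∑ s : Fin n, ∑ t : Fin n, ∫ ω, W s ω * W t ω := by
      have hsq : (fun ω => (∑ s, W s ω) ^ 2)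
          = fun ω => ∑ s : Fin n, ∑ t : Fin n, W s ω * W t ω := by
        funext ω; rw [sq, Finset.sum_mul_sum]
      rw [hsq, integral_finset_sum _ (fun s _ => integrable_finset_sum _ (fun t _ => hWW s t))]
      exact Finset.sum_congr rfl fun s _ => integral_finset_sum _ (fun t _ => hWW s t)
    have h2 : ∫ ω, (∑ s, W s ω) ^ 2 = c ^ 2 := by
      have : (fun ω => (∑ s, W s ω) ^ 2) =ᵐ[ℙ] fun _ => c ^ 2 :=
        hc.mono fun ω h => by simp [h]
      rw [integral_congr_ae this, integral_const]
      simp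
    rw [← h1, h2]
  -- sum of diagonal E[W_s²]
  have hB : ∑ s : Fin n, ∫ ω, W s ω * W s ω = EW2 := by
    rw [hEW2, integral_finset_sum _ (fun s _ => hWsq.mono' ((hWmeas s).pow_const 2).aestronglyMeasurable (by
      filter_upwards with ω
      rw [Real.norm_eq_abs, abs_of_nonneg (sq_nonneg _)]
      exact Finset.single_le_sum (fun t _ => sq_nonneg (W t ω)) (Finset.mem_univ s)))]
    congr 1; funext s; congr 1; funext ω; ring
  -- second moment of S
  have hES2 : ∫ ω, (∑ s, W s ω * Z s ω) ^ 2 = μZ ^ 2 * c ^ 2 + EW2 * (m2 - μZ ^ 2) := by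
    have hsq : (fun ω => (∑ s, W s ω * Z s ω) ^ 2)
        = fun ω => ∑ s : Fin n, ∑ t : Fin n, W s ω * W t ω * (Z s ω * Z t ω) := by
      funext ω
      rw [sq, Finset.sum_mul_sum]
      congr 1; funext s; congr 1; funext t; ring
    rw [hsq, integral_finset_sum _ (fun s _ => integrable_finset_sum _ (fun t _ => hterm s t))]
    have : ∀ s : Fin n, ∫ ω, ∑ t : Fin n, W s ω * W t ω * (Z s ω * Z t ω)
        = ∑ t : Fin n, (∫ ω, W s ω * W t ω) * (if s = t then m2 else μZ ^ 2) := by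
      intro s
      rw [integral_finset_sum _ (fun t _ => hterm s t)]
      exact Finset.sum_congr rfl fun t _ => by rw [hEterm s t, hEZZ s t]
    simp_rw [this]
    have key : ∀ s t : Fin n, (∫ ω, W s ω * W t ω) * (if s = t then m2 else μZ ^ 2)
        = (∫ ω, W s ω * W t ω) * μZ ^ 2
          + (if s = t then (∫ ω, W s ω * W t ω) * (m2 - μZ ^ 2) else 0) := by
      intro s t
      by_cases hst : s = t <;> simp [hst] <;> try ring
    simp_rw [key, Finset.sum_add_distrib, ← Finset.sum_mul, hA]
    have hdiag : ∀ s : Fin n,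
        ∑ t : Fin n, (if s = t then (∫ ω, W s ω * W t ω) * (m2 - μZ ^ 2) else 0)
        = (∫ ω, W s ω * W s ω) * (m2 - μZ ^ 2) := by
      intro s
      rw [Finset.sum_ite_eq (Finset.univ : Finset (Fin n)) s
        (fun t => (∫ ω, W s ω * W t ω) * (m2 - μZ ^ 2))]
      simp
    simp_rw [hdiag, ← Finset.sum_mul, hB]
    ring
  -- MemLp of S
  have hSmeas : Measurable fun ω => ∑ s, W s ω * Z s ω :=
    Finset.measurable_sum _ (fun s _ => (hWmeas s).mul (hZmeas s))
  have hS2int : Integrable (fun ω => (∑ s, W s ω * Z s ω) ^ 2) ℙ := by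
    have hsq : (fun ω => (∑ s, W s ω * Z s ω) ^ 2)
        = fun ω => ∑ s : Fin n, ∑ t : Fin n, W s ω * W t ω * (Z s ω * Z t ω) := by
      funext ω
      rw [sq, Finset.sum_mul_sum]
      congr 1; funext s; congr 1; funext t; ring
    rw [hsq]
    exact integrable_finset_sum _ (fun s _ => integrable_finset_sum _ (fun t _ => hterm s t))
  have hSmem : MemLp (fun ω => ∑ s, W s ω * Z s ω) 2 ℙ :=
    (memLp_two_iff_integrable_sq hSmeas.aestronglyMeasurable).2 hS2int
  -- variances
  have hvarZ : variance (Z i0) ℙ = m2 - μZ ^ 2 := by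
    rw [variance_eq_sub hZ0mem]
    rfl
  have hvarS : variance (fun ω => ∑ s, W s ω * Z s ω) ℙ = EW2 * (m2 - μZ ^ 2) := by
    rw [variance_eq_sub hSmem]
    have h1 : (∫ ω, ((fun ω => ∑ s, W s ω * Z s ω) ^ 2) ω) = μZ ^ 2 * c ^ 2 + EW2 * (m2 - μZ ^ 2) := by
      rw [← hES2]
      exact integral_congr_ae (Filter.Eventually.of_forall fun ω => by simp)
    rw [h1, hES]
    ring
  have hEW2nonneg : 0 ≤ EW2 :=
    integral_nonneg fun ω => Finset.sum_nonneg fun s _ => sq_nonneg _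
  constructor
  · rw [hvarS, hvarZ]
  · rw [hvarS]
    have : m2 - μZ ^ 2 ≤ m2 := by nlinarith [sq_nonneg μZ]
    exact mul_le_mul_of_nonneg_left this hEW2nonneg
end

section
/- Let D and r be positive integers and C ≥ 0. Let x be a random vector in ℝ^D and let ψ^{(0)}, …, ψ^{(r−1)} be real random variables (defined on the same probability space) satisfying E[ψ^{(ℓ)} ψ^{(m)}] = δ_{ℓm} for all ℓ, m ∈ {0, …, r−1}. Suppose there exist deterministic vectors α^{(0)}, …, α^{(r−1)} ∈ ℝ^D such that ‖x − Σ_{m=0}^{r−1} ψ^{(m)} α^{(m)}‖ ≤ C almost surely. Then for each ℓ the random vector ψ^{(ℓ)} x is integrable and ‖E[ψ^{(ℓ)} x] − α^{(ℓ)}‖ ≤ C · E[|ψ^{(ℓ)}|] ≤ C. -/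
open MeasureTheory ProbabilityTheory

/-- Key step in the proof of Theorem 2 of the paper: if the random volume `x` is
almost surely within `C` of its expansion `Σ_m ψ^{(m)} α^{(m)}` in orthonormal random
coefficients `ψ^{(ℓ)}`, then `E[ψ^{(ℓ)} x]` recovers `α^{(ℓ)}` up to an error of at
most `C · E|ψ^{(ℓ)}| ≤ C`. -/
theorem stmt_13
    {Ω : Type*} [MeasureSpace Ω] [IsProbabilityMeasure (ℙ : Measure Ω)]
    (D r : ℕ) (hD : 0 < D) (hr : 0 < r) (C : ℝ) (hC : 0 ≤ C)
    (x : Ω → EuclideanSpace ℝ (Fin D))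
    (ψ : Fin r → Ω → ℝ)
    (hxmeas : Measurable x)
    (hψmeas : ∀ ℓ, Measurable (ψ ℓ))
    -- the `ψ^{(ℓ)}` are orthonormal in `L²`:  `E[ψ^{(ℓ)} ψ^{(m)}] = δ_{ℓm}`
    (hψint : ∀ ℓ m : Fin r, Integrable (fun ω => ψ ℓ ω * ψ m ω) ℙ)
    (hψortho : ∀ ℓ m : Fin r,
      ∫ ω, ψ ℓ ω * ψ m ω ∂ℙ = if ℓ = m then (1 : ℝ) else 0)
    -- deterministic vectors `α^{(m)}` approximating `x` almost surely within `C`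
    (α : Fin r → EuclideanSpace ℝ (Fin D))
    (happrox : ∀ᵐ ω ∂ℙ, ‖x ω - ∑ m, ψ m ω • α m‖ ≤ C) :
    ∀ ℓ : Fin r,
      Integrable (fun ω => ψ ℓ ω • x ω) ℙ
        ∧ ‖(∫ ω, ψ ℓ ω • x ω ∂ℙ) - α ℓ‖ ≤ C * ∫ ω, |ψ ℓ ω| ∂ℙ
        ∧ C * ∫ ω, |ψ ℓ ω| ∂ℙ ≤ C := by
  intro ℓ
  -- ψ ℓ is in L², hence integrable
  have hψ2 : MemLp (ψ ℓ) 2 ℙ := by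
    rw [memLp_two_iff_integrable_sq (hψmeas ℓ).aestronglyMeasurable]
    simpa [pow_two] using hψint ℓ ℓ
  have hψL1 : Integrable (ψ ℓ) ℙ :=
    hψ2.integrable (by norm_num)
  have habs : Integrable (fun ω => |ψ ℓ ω|) ℙ := hψL1.abs
  -- error term
  set e : Ω → EuclideanSpace ℝ (Fin D) := fun ω => x ω - ∑ m, ψ m ω • α m with he
  have hemeas : Measurable e := by
    apply hxmeas.sub
    exact Finset.measurable_sum _ fun m _ => (hψmeas m).smul_const (α m)
  have hbound : ∀ᵐ ω ∂ℙ, ‖ψ ℓ ω • e ω‖ ≤ C * |ψ ℓ ω| := by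
    filter_upwards [happrox] with ω hω
    rw [norm_smul, Real.norm_eq_abs, mul_comm]
    exact mul_le_mul hω le_rfl (abs_nonneg _) hC
  have hCψ : Integrable (fun ω => C * |ψ ℓ ω|) ℙ := habs.const_mul C
  have hψe : Integrable (fun ω => ψ ℓ ω • e ω) ℙ :=
    Integrable.mono' hCψ (((hψmeas ℓ).smul hemeas).aestronglyMeasurable) hbound
  have hsum : Integrable (fun ω => ∑ m, (ψ ℓ ω * ψ m ω) • α m) ℙ :=
    integrable_finset_sum _ fun m _ => (hψint ℓ m).smul_const (α m)
  have hdecomp : (fun ω => ψ ℓ ω • x ω)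
      = fun ω => ψ ℓ ω • e ω + ∑ m, (ψ ℓ ω * ψ m ω) • α m := by
    funext ω
    simp only [he, smul_sub, Finset.smul_sum, smul_smul]
    abel
  have hint : Integrable (fun ω => ψ ℓ ω • x ω) ℙ := by
    rw [hdecomp]; exact hψe.add hsum
  refine ⟨hint, ?_, ?_⟩
  · -- compute the integral
    have h1 : (∫ ω, ψ ℓ ω • x ω ∂ℙ)
        = (∫ ω, ψ ℓ ω • e ω ∂ℙ) + ∑ m, (∫ ω, ψ ℓ ω * ψ m ω ∂ℙ) • α m := by
      rw [hdecomp, integral_add hψe hsum, integral_finset_sum _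
        (fun m _ => (hψint ℓ m).smul_const (α m))]
      simp [integral_smul_const]
    have h2 : ∑ m, (∫ ω, ψ ℓ ω * ψ m ω ∂ℙ) • α m = α ℓ := by
      simp only [hψortho]
      simp [Finset.sum_ite_eq]
    rw [h1, h2, add_sub_cancel_right]
    calc ‖∫ ω, ψ ℓ ω • e ω ∂ℙ‖ ≤ ∫ ω, C * |ψ ℓ ω| ∂ℙ :=
          norm_integral_le_of_norm_le hCψ hbound
      _ = C * ∫ ω, |ψ ℓ ω| ∂ℙ := integral_const_mul C _
  · -- E|ψ| ≤ 1 by Cauchy–Schwarz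
    have hCS : ∫ ω, |ψ ℓ ω| ∂ℙ ≤ 1 := by
      have h := integral_mul_le_Lp_mul_Lq_of_nonneg
        (Real.HolderConjugate.two_two : Real.HolderConjugate 2 2)
        (f := fun ω => |ψ ℓ ω|) (g := fun _ => (1 : ℝ))
        (Filter.Eventually.of_forall fun ω => abs_nonneg _)
        (Filter.Eventually.of_forall fun ω => zero_le_one)
        (by rw [show ENNReal.ofReal 2 = 2 by norm_num]; exact hψ2.abs)
        (by exact memLp_const (1 : ℝ))
      have hsq2 : ∫ ω, ψ ℓ ω ^ 2 ∂ℙ = 1 := by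
        simpa [pow_two] using hψortho ℓ ℓ
      simpa [hsq2] using h
    calc C * ∫ ω, |ψ ℓ ω| ∂ℙ ≤ C * 1 := by
          exact mul_le_mul_of_nonneg_left hCS hC
      _ = C := mul_one C
end
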